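/- Let μ = (μ₁, μ₂) ∈ ℝ² and define the linear functionals α(x) = (x₂ − x₁)/√2 and α*(x) = (x₁ + x₂)/√2 on ℝ². Assume α(μ) > 0. Then the function h : ℝ² → (0,∞) defined by h(x) = exp(α*(μ) α*(x)) · K_{α(μ)}(exp(−α(x))) is twice continuously differentiable and satisfies (1/2)Δh(x) = ((1/2) exp(−2α(x)) + (1/2)‖μ‖²) h(x) for all x ∈ ℝ². -/

import Mathlib

open Real

/-- The Macdonald function `K_μ(z) = (1/2) (z/2)^μ ∫_0^∞ t^{-1-μ} exp(-t - z²/(4t)) dt`. -/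
noncomputable def macdonaldK (μ z : ℝ) : ℝ :=
  (1 / 2) * (z / 2) ^ μ *
    ∫ t in Set.Ioi (0 : ℝ), t ^ (-1 - μ) * Real.exp (-t - z ^ 2 / (4 * t))

/-! Write `a = α*(μ)`, `ν = α(μ)` and `f(r) = K_ν(e^{-r})`, so that `h = e^{a α*} (f ∘ α)`.
Since `α*` and `α` are orthonormal coordinates on `ℝ²`, `Δh = e^{a α*} (a² f + f'') ∘ α`, and
`a² + ν² = ‖μ‖²`; so the claim is the ODE `f'' = (ν² + e^{-2r}) f`, the modified Bessel
equation after the substitution `z = e^{-r}`. It follows from `K_ν' = (ν/z) K_ν - K_{ν+1}` and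
the recurrence `K_{ν+2} = K_ν + (2(ν+1)/z) K_{ν+1}`. Writing `K_ν(z) = ½ (z/2)^ν J_ν((z/2)²)`
with `J_ν(c) = ∫₀^∞ t^{-1-ν} e^{-t-c/t} dt`, these reduce to `∂_c J_ν = -J_{ν+1}`
(differentiation under the integral, dominated by `e^{-t/2}`) and to
`c J_{ν+2} = (ν+1) J_{ν+1} + J_ν`, which is `∫₀^∞ ∂_t (t^{-1-ν} e^{-t-c/t}) dt = 0`. -/

open MeasureTheory Set Filter Topology

lemma rpow_mul_exp_neg_le (p : ℝ) {c₀ c t : ℝ} (hc₀ : 0 < c₀) (hc : c₀ ≤ c) (ht : 0 < t) :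
    t ^ p * exp (-t - c / t) ≤
      exp (2 * p ^ 2 + 2 * p ^ 2 / c₀) * exp (-(t / 2 + c₀ / (2 * t))) := by
  obtain ⟨s, hs, rfl⟩ : ∃ s, 0 < s ∧ s ^ 2 = t := ⟨√t, sqrt_pos.2 ht, sq_sqrt ht.le⟩
  have hlog : |log s| ≤ s + 1 / s := by
    have hup := log_le_sub_one_of_pos hs
    have hlow := log_le_sub_one_of_pos (one_div_pos.2 hs)
    rw [one_div, log_inv] at hlow
    exact abs_le.2 ⟨by rw [one_div]; linarith, by linarith [one_div_pos.2 hs]⟩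
  have hplog : p * log (s ^ 2) ≤ 2 * |p| * s + 2 * |p| / s :=
    calc p * log (s ^ 2) = 2 * (p * log s) := by rw [log_pow]; push_cast; ring
      _ ≤ 2 * (|p| * |log s|) := by rw [← abs_mul]; gcongr; exact le_abs_self _
      _ ≤ 2 * (|p| * (s + 1 / s)) := by gcongr
      _ = 2 * |p| * s + 2 * |p| / s := by ring
  rw [← sq_abs p]
  -- AM-GM absorbs `2|p|√t` into `t/2` and `2|p|/√t` into `c₀/(2t)`.
  have hs_le : 2 * |p| * s ≤ s ^ 2 / 2 + 2 * |p| ^ 2 := by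
    nlinarith [sq_nonneg (s - 2 * |p|)]
  have hinv_le : 2 * |p| / s ≤ c₀ / (2 * s ^ 2) + 2 * |p| ^ 2 / c₀ := by
    rw [div_add_div _ _ (by positivity) hc₀.ne', div_le_div_iff₀ hs (by positivity)]
    nlinarith [mul_nonneg hs.le (sq_nonneg (c₀ - 2 * |p| * s))]
  have hc' : c₀ / s ^ 2 ≤ c / s ^ 2 := by gcongr
  rw [rpow_def_of_pos (by positivity), ← exp_add, ← exp_add, exp_le_exp]
  have : c₀ / (2 * s ^ 2) = c₀ / s ^ 2 / 2 := by ring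
  linarith

noncomputable def macdonaldIntegrand (ν c t : ℝ) : ℝ := t ^ (-1 - ν) * exp (-t - c / t)

noncomputable def macdonaldIntegral (ν c : ℝ) : ℝ := ∫ t in Ioi 0, macdonaldIntegrand ν c t

section MacdonaldIntegral

variable (ν : ℝ) {c : ℝ}

lemma norm_macdonaldIntegrand_le {c₀ t : ℝ} (hc₀ : 0 < c₀) (hc : c₀ ≤ c) (ht : 0 < t) :
    ‖macdonaldIntegrand ν c t‖ ≤
      exp (2 * (-1 - ν) ^ 2 + 2 * (-1 - ν) ^ 2 / c₀) * exp (-(1 / 2) * t) := by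
  rw [Real.norm_of_nonneg (by unfold macdonaldIntegrand; positivity)]
  refine (rpow_mul_exp_neg_le _ hc₀ hc ht).trans ?_
  have : 0 < c₀ / (2 * t) := by positivity
  gcongr
  linarith

lemma continuousOn_macdonaldIntegrand : ContinuousOn (macdonaldIntegrand ν c) (Ioi 0) :=
  fun t ht => ((continuousAt_rpow_const t _ (Or.inl (ne_of_gt ht))).mul
    (continuous_exp.continuousAt.comp
      (continuousAt_id.neg.sub (continuousAt_const.div continuousAt_id (ne_of_gt ht))))
    ).continuousWithinAt

lemma aestronglyMeasurable_macdonaldIntegrand :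
    AEStronglyMeasurable (macdonaldIntegrand ν c) (volume.restrict (Ioi 0)) :=
  (continuousOn_macdonaldIntegrand ν).aestronglyMeasurable measurableSet_Ioi

lemma integrableOn_macdonaldIntegrand (hc : 0 < c) :
    IntegrableOn (macdonaldIntegrand ν c) (Ioi 0) :=
  ((exp_neg_integrableOn_Ioi 0 one_half_pos).const_mul _).mono'
    (aestronglyMeasurable_macdonaldIntegrand ν)
    ((ae_restrict_iff' measurableSet_Ioi).2 (.of_forall fun _ ht =>
      norm_macdonaldIntegrand_le ν hc le_rfl ht))

lemma tendsto_macdonaldIntegrand_zero (hc : 0 < c) {l : Filter ℝ} (hpos : ∀ᶠ t in l, 0 < t)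
    (hl : Tendsto (fun t => t / 2 + c / (2 * t)) l atTop) :
    Tendsto (macdonaldIntegrand ν c) l (𝓝 0) := by
  have hbound : Tendsto (fun t => exp (2 * (-1 - ν) ^ 2 + 2 * (-1 - ν) ^ 2 / c) *
      exp (-(t / 2 + c / (2 * t)))) l (𝓝 0) := by
    simpa using (tendsto_exp_atBot.comp (tendsto_neg_atTop_atBot.comp hl)).const_mul _
  refine squeeze_zero' ?_ ?_ hbound
  · filter_upwards [hpos] with t ht
    unfold macdonaldIntegrand; positivity
  · filter_upwards [hpos] with t ht
    exact rpow_mul_exp_neg_le _ hc le_rfl ht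

lemma hasDerivAt_macdonaldIntegrand_param {t : ℝ} (ht : 0 < t) :
    HasDerivAt (fun c => macdonaldIntegrand ν c t) (-macdonaldIntegrand (ν + 1) c t) c := by
  have h := (((hasDerivAt_id c).div_const t).const_sub (-t)).exp.const_mul (t ^ (-1 - ν))
  refine h.congr_deriv ?_
  rw [macdonaldIntegrand, show -1 - (ν + 1) = (-1 - ν) + (-1) by ring, rpow_add ht,
    rpow_neg_one, id]
  ring

lemma hasDerivAt_macdonaldIntegral (hc : 0 < c) :
    HasDerivAt (macdonaldIntegral ν) (-macdonaldIntegral (ν + 1) c) c := by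
  have hball : ∀ x ∈ Metric.ball c (c / 2), c / 2 ≤ x := fun x hx => by
    rw [Metric.mem_ball, Real.dist_eq, abs_lt] at hx; linarith
  have key := hasDerivAt_integral_of_dominated_loc_of_deriv_le
    (F := fun c t => macdonaldIntegrand ν c t) (F' := fun c t => -macdonaldIntegrand (ν + 1) c t)
    (Metric.ball_mem_nhds c (half_pos hc))
    (.of_forall fun _ => aestronglyMeasurable_macdonaldIntegrand ν)
    (integrableOn_macdonaldIntegrand ν hc)
    (aestronglyMeasurable_macdonaldIntegrand (ν + 1)).neg
    ((ae_restrict_iff' measurableSet_Ioi).2 (.of_forall fun _ ht x hx => by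
      simpa only [norm_neg] using
        norm_macdonaldIntegrand_le (ν + 1) (half_pos hc) (hball x hx) ht))
    ((exp_neg_integrableOn_Ioi 0 one_half_pos).const_mul _)
    ((ae_restrict_iff' measurableSet_Ioi).2 (.of_forall fun _ ht _ _ =>
      hasDerivAt_macdonaldIntegrand_param ν ht))
  rw [integral_neg] at key
  exact key.2

lemma hasDerivAt_macdonaldIntegrand {t : ℝ} (ht : 0 < t) :
    HasDerivAt (macdonaldIntegrand ν c)
      (c * macdonaldIntegrand (ν + 2) c t - (ν + 1) * macdonaldIntegrand (ν + 1) c t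
        - macdonaldIntegrand ν c t) t := by
  have hexp : HasDerivAt (fun t => -t - c / t) (-1 + c / t ^ 2) t :=
    ((hasDerivAt_neg' t).sub ((hasDerivAt_const t c).div (hasDerivAt_id' t) ht.ne')).congr_deriv
      (by ring)
  refine ((hasDerivAt_rpow_const (Or.inl ht.ne')).mul hexp.exp).congr_deriv ?_
  have h1 : t ^ (-1 - ν - 1) = t ^ (-1 - (ν + 1)) := by ring_nf
  have h2 : t ^ (-1 - ν) = t ^ (-1 - (ν + 2)) * t ^ 2 := by
    rw [← rpow_natCast, ← rpow_add ht]; push_cast; ring_nf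
  simp only [macdonaldIntegrand, h1, h2]
  field_simp
  ring

lemma macdonaldIntegral_recurrence (hc : 0 < c) :
    c * macdonaldIntegral (ν + 2) c =
      (ν + 1) * macdonaldIntegral (ν + 1) c + macdonaldIntegral ν c := by
  -- `macdonaldIntegrand ν c 0` is a junk value of `rpow`; replace it by the limit `0` at `0⁺`.
  set f := Function.update (macdonaldIntegrand ν c) 0 0
  have hfI : ∀ {t}, t ≠ 0 → f =ᶠ[𝓝 t] macdonaldIntegrand ν c := fun ht =>
    (eventually_ne_nhds ht).mono fun _ hs => Function.update_of_ne hs _ _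
  have hcont : ContinuousWithinAt f (Ici 0) 0 := by
    rw [continuousWithinAt_update_same, Ici_sdiff_left]
    refine tendsto_macdonaldIntegrand_zero ν hc self_mem_nhdsWithin ?_
    refine tendsto_atTop_mono' _ (eventually_nhdsWithin_of_forall fun t (ht : 0 < t) => ?_)
      ((tendsto_inv_nhdsGT_zero.const_mul_atTop (half_pos hc)))
    show c / 2 * t⁻¹ ≤ t / 2 + c / (2 * t)
    have : c / (2 * t) = c / 2 * t⁻¹ := by ring
    have : 0 < t / 2 := by positivity
    linarith
  have htop : Tendsto f atTop (𝓝 0) := by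
    refine (tendsto_macdonaldIntegrand_zero ν hc (eventually_gt_atTop 0) ?_).congr' ?_
    · refine tendsto_atTop_mono' _ ?_ (tendsto_id.atTop_div_const two_pos)
      filter_upwards [eventually_gt_atTop 0] with t ht
      show t / 2 ≤ t / 2 + c / (2 * t)
      have : 0 < c / (2 * t) := by positivity
      linarith
    · filter_upwards [eventually_gt_atTop 0] with t ht using (hfI ht.ne').self_of_nhds.symm
  have h₂ := (integrableOn_macdonaldIntegrand (ν + 2) hc).const_mul c
  have h₁ := (integrableOn_macdonaldIntegrand (ν + 1) hc).const_mul (ν + 1)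
  have h₀ := integrableOn_macdonaldIntegrand ν hc
  have h₂₁ : IntegrableOn (fun t => c * macdonaldIntegrand (ν + 2) c t
      - (ν + 1) * macdonaldIntegrand (ν + 1) c t) (Ioi 0) := h₂.sub h₁
  have hftc := integral_Ioi_of_hasDerivAt_of_tendsto hcont
    (fun t ht => (hasDerivAt_macdonaldIntegrand ν ht).congr_of_eventuallyEq (hfI (ne_of_gt ht)))
    (h₂₁.sub h₀) htop
  rw [integral_sub h₂₁ h₀, integral_sub h₂ h₁, integral_const_mul, integral_const_mul,
    show f 0 = 0 from Function.update_self ..] at hftc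
  unfold macdonaldIntegral
  linarith

end MacdonaldIntegral

section MacdonaldK

variable (ν : ℝ) {z : ℝ}

lemma macdonaldK_eq_macdonaldIntegral (z : ℝ) :
    macdonaldK ν z = 1 / 2 * (z / 2) ^ ν * macdonaldIntegral ν ((z / 2) ^ 2) := by
  simp only [macdonaldK, macdonaldIntegral, macdonaldIntegrand, div_pow, div_div]
  norm_num

lemma hasDerivAt_macdonaldK (hz : 0 < z) :
    HasDerivAt (macdonaldK ν) (ν / z * macdonaldK ν z - macdonaldK (ν + 1) z) z := by
  have hw : 0 < z / 2 := half_pos hz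
  have hpow : HasDerivAt (fun z => (z / 2) ^ ν) (1 / 2 * ν * (z / 2) ^ (ν - 1)) z :=
    ((hasDerivAt_id' z).div_const 2).rpow_const (Or.inl hw.ne')
  have hint : HasDerivAt (fun z => macdonaldIntegral ν ((z / 2) ^ 2))
      (-macdonaldIntegral (ν + 1) ((z / 2) ^ 2) * (z / 2)) z := by
    refine (hasDerivAt_macdonaldIntegral ν (by positivity)).comp z ?_
    exact (((hasDerivAt_id' z).div_const 2).pow 2).congr_deriv (by norm_num; ring)
  refine (((hpow.const_mul (1 / 2)).mul hint).congr_deriv ?_).congr_of_eventuallyEq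
    (.of_forall (macdonaldK_eq_macdonaldIntegral ν))
  rw [macdonaldK_eq_macdonaldIntegral, macdonaldK_eq_macdonaldIntegral, rpow_sub_one hw.ne',
    rpow_add_one hw.ne']
  field_simp
  ring

lemma macdonaldK_add_two (hz : 0 < z) :
    macdonaldK (ν + 2) z = macdonaldK ν z + 2 * (ν + 1) / z * macdonaldK (ν + 1) z := by
  have hw : 0 < z / 2 := half_pos hz
  have hrec := macdonaldIntegral_recurrence ν (pow_pos hw 2)
  have hcancel : 2 * (ν + 1) / z * (z / 2) = ν + 1 := by field_simp
  simp only [macdonaldK_eq_macdonaldIntegral]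
  rw [rpow_add hw, rpow_two, rpow_add_one hw.ne']
  linear_combination (1 / 2 * (z / 2) ^ ν) * hrec
    - (1 / 2 * (z / 2) ^ ν * macdonaldIntegral (ν + 1) ((z / 2) ^ 2)) * hcancel

end MacdonaldK

section MacdonaldKExpNeg

variable (ν r : ℝ)

lemma hasDerivAt_macdonaldK_exp_neg :
    HasDerivAt (fun r => macdonaldK ν (exp (-r)))
      (exp (-r) * macdonaldK (ν + 1) (exp (-r)) - ν * macdonaldK ν (exp (-r))) r := by
  refine ((hasDerivAt_macdonaldK ν (exp_pos (-r))).comp r (hasDerivAt_neg' r).exp).congr_deriv ?_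
  field_simp
  ring

lemma hasDerivAt_deriv_macdonaldK_exp_neg :
    HasDerivAt (fun r => exp (-r) * macdonaldK (ν + 1) (exp (-r)) - ν * macdonaldK ν (exp (-r)))
      ((exp (-2 * r) + ν ^ 2) * macdonaldK ν (exp (-r))) r := by
  have h := (((hasDerivAt_neg' r).exp.mul (hasDerivAt_macdonaldK_exp_neg (ν + 1) r)).sub
    ((hasDerivAt_macdonaldK_exp_neg ν r).const_mul ν))
  refine h.congr_deriv ?_
  have hexp : exp (-2 * r) = exp (-r) * exp (-r) := by rw [← exp_add]; ring_nf
  rw [show ν + 1 + 1 = ν + 2 by ring, macdonaldK_add_two ν (exp_pos (-r)), hexp]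
  field_simp
  ring

end MacdonaldKExpNeg

lemma contDiff_two_of_hasDerivAt {f f' f'' : ℝ → ℝ} (hf : ∀ x, HasDerivAt f (f' x) x)
    (hf' : ∀ x, HasDerivAt f' (f'' x) x) (hf'' : Continuous f'') : ContDiff ℝ 2 f := by
  rw [show (2 : WithTop ℕ∞) = 1 + 1 from rfl, contDiff_succ_iff_deriv, contDiff_one_iff_deriv,
    funext fun x => (hf x).deriv, funext fun x => (hf' x).deriv]
  exact ⟨fun x => (hf x).differentiableAt, by simp, fun x => (hf' x).differentiableAt, hf''⟩

lemma contDiff_macdonaldK_exp_neg (ν : ℝ) : ContDiff ℝ 2 (fun r => macdonaldK ν (exp (-r))) :=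
  contDiff_two_of_hasDerivAt (hasDerivAt_macdonaldK_exp_neg ν)
    (hasDerivAt_deriv_macdonaldK_exp_neg ν)
    ((continuous_exp.comp (continuous_const.mul continuous_id)).add continuous_const |>.mul
      (continuous_iff_continuousAt.2 fun r => (hasDerivAt_macdonaldK_exp_neg ν r).continuousAt))

section CompMulComp

variable {E : Type*} [NormedAddCommGroup E] [NormedSpace ℝ E] (S R : E →L[ℝ] ℝ)
  {f f' f'' g g' g'' : ℝ → ℝ}

lemma hasFDerivAt_comp_mul_comp (hg : ∀ s, HasDerivAt g (g' s) s)
    (hf : ∀ r, HasDerivAt f (f' r) r) (x : E) :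
    HasFDerivAt (fun z => g (S z) * f (R z))
      ((g' (S x) * f (R x)) • S + (g (S x) * f' (R x)) • R) x := by
  refine (((hg (S x)).comp_hasFDerivAt x S.hasFDerivAt).mul
    ((hf (R x)).comp_hasFDerivAt x R.hasFDerivAt)).congr_fderiv ?_
  ext v
  simp only [add_apply, smul_apply, smul_eq_mul, Function.comp_apply]
  ring

lemma fderiv_fderiv_comp_mul_comp_apply (hg : ∀ s, HasDerivAt g (g' s) s)
    (hg' : ∀ s, HasDerivAt g' (g'' s) s) (hf : ∀ r, HasDerivAt f (f' r) r)
    (hf' : ∀ r, HasDerivAt f' (f'' r) r) (x v : E) :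
    fderiv ℝ (fun y => fderiv ℝ (fun z => g (S z) * f (R z)) y v) x v =
      g'' (S x) * f (R x) * S v ^ 2 + 2 * (g' (S x) * f' (R x)) * (S v * R v)
        + g (S x) * f'' (R x) * R v ^ 2 := by
  have hfirst : (fun y => fderiv ℝ (fun z => g (S z) * f (R z)) y v) =
      fun y => S v * (g' (S y) * f (R y)) + R v * (g (S y) * f' (R y)) := by
    ext y
    rw [(hasFDerivAt_comp_mul_comp S R hg hf y).fderiv]
    simp only [add_apply, smul_apply, smul_eq_mul]
    ring
  have hsecond : HasFDerivAt (fun y => S v * (g' (S y) * f (R y)) + R v * (g (S y) * f' (R y)))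
      (S v • ((g'' (S x) * f (R x)) • S + (g' (S x) * f' (R x)) • R)
        + R v • ((g' (S x) * f' (R x)) • S + (g (S x) * f'' (R x)) • R)) x :=
    ((hasFDerivAt_comp_mul_comp S R hg' hf x).const_mul (S v)).add
      ((hasFDerivAt_comp_mul_comp S R hg hf' x).const_mul (R v))
  rw [hfirst, hsecond.fderiv]
  simp only [smul_add, add_apply, smul_apply, smul_eq_mul]
  ring

end CompMulComp

noncomputable def alpha : (Fin 2 → ℝ) →L[ℝ] ℝ :=
  (√2)⁻¹ • (.proj 1 - .proj 0 : (Fin 2 → ℝ) →L[ℝ] ℝ)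

noncomputable def alphaStar : (Fin 2 → ℝ) →L[ℝ] ℝ :=
  (√2)⁻¹ • (.proj 0 + .proj 1 : (Fin 2 → ℝ) →L[ℝ] ℝ)

lemma alpha_apply (x : Fin 2 → ℝ) : alpha x = (x 1 - x 0) / √2 := by
  simp [alpha, div_eq_inv_mul]

lemma alphaStar_apply (x : Fin 2 → ℝ) : alphaStar x = (x 0 + x 1) / √2 := by
  simp [alphaStar, div_eq_inv_mul, mul_add]

lemma alphaStar_sq_add_alpha_sq (x : Fin 2 → ℝ) :
    alphaStar x ^ 2 + alpha x ^ 2 = x 0 ^ 2 + x 1 ^ 2 := by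
  rw [alpha_apply, alphaStar_apply, div_pow, div_pow, sq_sqrt zero_le_two]
  ring

lemma alphaStar_single (j : Fin 2) : alphaStar (Pi.single j 1) = (√2)⁻¹ := by
  fin_cases j <;> simp [alphaStar_apply]

lemma alpha_single_zero : alpha (Pi.single 0 1) = -(√2)⁻¹ := by
  simp [alpha_apply, neg_div]

lemma alpha_single_one : alpha (Pi.single 1 1) = (√2)⁻¹ := by
  simp [alpha_apply]

theorem explicit_eigenfunction_A1_in_R2_general (μ : Fin 2 → ℝ) :
    ContDiff ℝ 2 (fun x : Fin 2 → ℝ =>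
      Real.exp ((μ 0 + μ 1) / Real.sqrt 2 * ((x 0 + x 1) / Real.sqrt 2)) *
        macdonaldK ((μ 1 - μ 0) / Real.sqrt 2) (Real.exp (-((x 1 - x 0) / Real.sqrt 2)))) ∧
    ∀ x : Fin 2 → ℝ,
      (1 / 2) * ∑ j, fderiv ℝ (fun y : Fin 2 → ℝ =>
          fderiv ℝ (fun z : Fin 2 → ℝ =>
            Real.exp ((μ 0 + μ 1) / Real.sqrt 2 * ((z 0 + z 1) / Real.sqrt 2)) *
              macdonaldK ((μ 1 - μ 0) / Real.sqrt 2)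
                (Real.exp (-((z 1 - z 0) / Real.sqrt 2)))) y (Pi.single j 1)) x (Pi.single j 1)
        = ((1 / 2) * Real.exp (-2 * ((x 1 - x 0) / Real.sqrt 2))
            + (1 / 2) * (μ 0 ^ 2 + μ 1 ^ 2)) *
          (Real.exp ((μ 0 + μ 1) / Real.sqrt 2 * ((x 0 + x 1) / Real.sqrt 2)) *
            macdonaldK ((μ 1 - μ 0) / Real.sqrt 2)
              (Real.exp (-((x 1 - x 0) / Real.sqrt 2)))) := by
  simp only [← alpha_apply, ← alphaStar_apply, ← alphaStar_sq_add_alpha_sq μ]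
  set a := alphaStar μ
  set ν := alpha μ
  have hg : ∀ s, HasDerivAt (fun s => exp (a * s)) (a * exp (a * s)) s := fun s =>
    ((hasDerivAt_id' s).const_mul a).exp.congr_deriv (by ring)
  have hg' : ∀ s, HasDerivAt (fun s => a * exp (a * s)) (a ^ 2 * exp (a * s)) s := fun s =>
    ((hg s).const_mul a).congr_deriv (by ring)
  refine ⟨((contDiff_const.mul contDiff_id).exp.comp alphaStar.contDiff).mul
    ((contDiff_macdonaldK_exp_neg ν).comp alpha.contDiff), fun x => ?_⟩
  rw [Fin.sum_univ_two, fderiv_fderiv_comp_mul_comp_apply alphaStar alpha hg hg'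
      (hasDerivAt_macdonaldK_exp_neg ν) (hasDerivAt_deriv_macdonaldK_exp_neg ν),
    fderiv_fderiv_comp_mul_comp_apply alphaStar alpha hg hg'
      (hasDerivAt_macdonaldK_exp_neg ν) (hasDerivAt_deriv_macdonaldK_exp_neg ν),
    alphaStar_single, alphaStar_single, alpha_single_zero, alpha_single_one]
  have hinv_sq : (√2)⁻¹ ^ 2 = 1 / 2 := by rw [inv_pow, sq_sqrt zero_le_two, one_div]
  linear_combination (exp (a * alphaStar x) * macdonaldK ν (exp (-alpha x)) *
    (a ^ 2 + exp (-2 * alpha x) + ν ^ 2)) * hinv_sq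

/-- with `α(x) = (x₂−x₁)/√2`, `α*(x) = (x₁+x₂)/√2` on `ℝ²` and `α(μ) > 0`,
the function `h(x) = exp(α*(μ)α*(x)) K_{α(μ)}(exp(−α(x)))` is `C²` and satisfies
`(1/2)Δh(x) = ((1/2) e^{−2α(x)} + (1/2)‖μ‖²) h(x)`. -/
theorem explicit_eigenfunction_A1_in_R2 (μ : Fin 2 → ℝ)
    (hμ : 0 < (μ 1 - μ 0) / Real.sqrt 2) :
    ContDiff ℝ 2 (fun x : Fin 2 → ℝ =>
      Real.exp ((μ 0 + μ 1) / Real.sqrt 2 * ((x 0 + x 1) / Real.sqrt 2)) *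
        macdonaldK ((μ 1 - μ 0) / Real.sqrt 2) (Real.exp (-((x 1 - x 0) / Real.sqrt 2)))) ∧
    ∀ x : Fin 2 → ℝ,
      (1 / 2) * ∑ j, fderiv ℝ (fun y : Fin 2 → ℝ =>
          fderiv ℝ (fun z : Fin 2 → ℝ =>
            Real.exp ((μ 0 + μ 1) / Real.sqrt 2 * ((z 0 + z 1) / Real.sqrt 2)) *
              macdonaldK ((μ 1 - μ 0) / Real.sqrt 2)
                (Real.exp (-((z 1 - z 0) / Real.sqrt 2)))) y (Pi.single j 1)) x (Pi.single j 1)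
        = ((1 / 2) * Real.exp (-2 * ((x 1 - x 0) / Real.sqrt 2))
            + (1 / 2) * (μ 0 ^ 2 + μ 1 ^ 2)) *
          (Real.exp ((μ 0 + μ 1) / Real.sqrt 2 * ((x 0 + x 1) / Real.sqrt 2)) *
            macdonaldK ((μ 1 - μ 0) / Real.sqrt 2)
              (Real.exp (-((x 1 - x 0) / Real.sqrt 2)))) :=
  explicit_eigenfunction_A1_in_R2_general μ
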